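/- arXiv:2409.14788 — 3 statements merged into one kernel-verified Lean document; each statement's English description precedes it below -/
import Mathlib

section
/- Let a and n be integers with a ≥ 5, n ≥ 3, a(n−2) ≥ 6n−1, and either (a ≡ 1 and n ≡ 3 (mod 4)) or (a ≡ 3 and n ≡ 1 (mod 4)). Then the Sylvester number (genus) of the triple {S_{a,n}, S_{a,n+1}, S_{a,n+2}} equals (1/8)·((a²+16a−12)n³ − (12a+8)n² − (4a²+14a−23)n + 4a − 6). -/
/-- The 2-step star number `S_{a,n} = a·n·(n−2) + 1`. -/
def twoStepStar (a n : ℕ) : ℕ := a * n * (n - 2) + 1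

/-- The Sylvester number (genus) of a set `A` of natural numbers: the number of nonnegative
integers that are not a nonnegative integer linear combination of elements of `A`. -/
noncomputable def sylvesterNumber (A : Set ℕ) : ℕ :=
  Set.ncard {m : ℕ | m ∉ AddSubmonoid.closure A}

/-!
Write `s, q, r` for `S_{a,n}, S_{a,n+1}, S_{a,n+2}`; the hypotheses give
`a (n - 2) = 6n - 1 + 4e` with `e ∈ ℕ`. Modulo `s` we have `q ≡ a (2n - 1)` and `r ≡ 4an`,
and `a` is a unit, so the pairs `(u, v)` with `s ∣ u q + v r` form the lattice spanned by
`(4n, 1 - 2n)` and `(-(n + 1), 2n + e)`. Translating by `α` times the first and `β` times the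
second vector raises `x q + y r` by `((2n + 1) α + (a + e + n - 1) β) s`, and a sign analysis
shows that from a point of the L-shaped region
`[0, 4n) × [0, 2n + e) \ [3n - 1, 4n) × [e + 1, 2n + e)`
every other translate in `ℕ²` is larger by at least `s`. The region has `s` points, so its
values are the Apéry set of `⟨s, q, r⟩` with respect to `s`, and Selmer's formula
`2 ∑ Ap = s (2g + s - 1)` yields the genus `g`.
-/

open Finset

section Apery

variable {ι : Type*} {s : ℕ} {P : Finset ι} {f : ι → ℕ}

lemma image_mod_eq_range (hs : 0 < s) (hcard : #P = s) (hinj : Set.InjOn (fun i ↦ f i % s) P) :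
    P.image (fun i ↦ f i % s) = range s := by
  refine eq_of_subset_of_card_le (fun t ht ↦ ?_) ?_
  · obtain ⟨i, -, rfl⟩ := mem_image.1 ht
    exact mem_range.2 (Nat.mod_lt _ hs)
  · rw [card_range, card_image_of_injOn hinj, hcard]

lemma exists_mem_mod_eq (hs : 0 < s) (hcard : #P = s) (hinj : Set.InjOn (fun i ↦ f i % s) P)
    (w : ℕ) : ∃ i ∈ P, f i % s = w % s := by
  have : w % s ∈ P.image (fun i ↦ f i % s) := by
    rw [image_mod_eq_range hs hcard hinj]
    exact mem_range.2 (Nat.mod_lt _ hs)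
  simpa using this

/-- The gaps of `closure A` in the residue class of `f i` are `f i - s, f i - 2 s, …`, so there
are `f i / s` of them. -/
theorem sylvesterNumber_eq_sum_div {A : Set ℕ} (hs : 0 < s) (hcard : #P = s)
    (hinj : Set.InjOn (fun i ↦ f i % s) P)
    (hA : ∀ w, w ∈ AddSubmonoid.closure A ↔ ∃ i ∈ P, f i % s = w % s ∧ f i ≤ w) :
    sylvesterNumber A = ∑ i ∈ P, f i / s := by
  have hgaps : {w | w ∉ AddSubmonoid.closure A} =
      ↑(P.biUnion fun i ↦ {w ∈ range (f i) | w ≡ f i [MOD s]}) := by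
    ext w
    simp only [Set.mem_ofPred_eq, coe_biUnion, coe_filter, mem_range, Set.mem_iUnion,
      exists_prop, hA, not_exists, not_and]
    constructor
    · intro hw
      obtain ⟨i, hi, hiw⟩ := exists_mem_mod_eq hs hcard hinj w
      exact ⟨i, hi, not_le.1 (hw i hi hiw), hiw.symm⟩
    · rintro ⟨i, hi, hwi, hiw⟩ j hj hjw hjle
      obtain rfl : j = i := hinj hj hi (hjw.trans hiw)
      omega
  have hdisj : (P : Set ι).PairwiseDisjoint fun i ↦ {w ∈ range (f i) | w ≡ f i [MOD s]} := by
    intro i hi j hj hij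
    refine disjoint_left.2 fun w hwi hwj ↦ hij (hinj hi hj ?_)
    exact (mem_filter.1 hwi).2.symm.trans (mem_filter.1 hwj).2
  rw [sylvesterNumber, hgaps, Set.ncard_coe_finset, card_biUnion hdisj]
  refine sum_congr rfl fun i _ ↦ ?_
  rw [← Nat.count_eq_card_filter_range, Nat.count_modEq_card _ hs, if_neg (lt_irrefl _),
    add_zero]

theorem two_mul_sum_eq_of_sylvesterNumber {A : Set ℕ} (hs : 0 < s) (hcard : #P = s)
    (hinj : Set.InjOn (fun i ↦ f i % s) P)
    (hA : ∀ w, w ∈ AddSubmonoid.closure A ↔ ∃ i ∈ P, f i % s = w % s ∧ f i ≤ w) :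
    2 * ∑ i ∈ P, f i = s * (2 * sylvesterNumber A + s - 1) := by
  have hmod : ∑ i ∈ P, f i % s = ∑ t ∈ range s, t := by
    rw [← image_mod_eq_range hs hcard hinj, sum_image hinj]
  have hsplit : ∑ i ∈ P, f i = s * sylvesterNumber A + ∑ t ∈ range s, t := by
    rw [sylvesterNumber_eq_sum_div hs hcard hinj hA, mul_sum, ← hmod, ← sum_add_distrib]
    exact sum_congr rfl fun i _ ↦ (Nat.div_add_mod _ _).symm
  have hgauss := sum_range_id_mul_two s
  rw [Nat.add_sub_assoc (show 1 ≤ s from hs), mul_add, mul_left_comm]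
  omega

end Apery

lemma AddSubmonoid.mem_closure_triple {s q r w : ℕ} :
    w ∈ AddSubmonoid.closure {s, q, r} ↔ ∃ z x y : ℕ, z * s + x * q + y * r = w := by
  rw [← Set.singleton_union, AddSubmonoid.closure_union, AddSubmonoid.mem_sup]
  simp_rw [AddSubmonoid.mem_closure_singleton, AddSubmonoid.mem_closure_pair, smul_eq_mul,
    exists_exists_eq_and, add_assoc]
  aesop

/-- `hmin` and `hcard` say that the values `x q + y r` over `P` form the Apéry set of
`⟨s, q, r⟩` with respect to `s`. -/
theorem two_mul_sum_eq_of_minimal {s q r : ℕ} {P : Finset (ℕ × ℕ)} (hs : 0 < s)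
    (hcard : #P = s)
    (hmin : ∀ p ∈ P, ∀ p' : ℕ × ℕ, p' ≠ p →
      (p.1 * q + p.2 * r) % s = (p'.1 * q + p'.2 * r) % s →
      p.1 * q + p.2 * r + s ≤ p'.1 * q + p'.2 * r) :
    2 * ∑ p ∈ P, (p.1 * q + p.2 * r) = s * (2 * sylvesterNumber {s, q, r} + s - 1) := by
  have hinj : Set.InjOn (fun p : ℕ × ℕ ↦ (p.1 * q + p.2 * r) % s) P := by
    intro p hp p' hp' hpp'
    by_contra hne
    have := hmin p hp p' (Ne.symm hne) hpp'
    have := hmin p' hp' p hne hpp'.symm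
    omega
  refine two_mul_sum_eq_of_sylvesterNumber hs hcard hinj fun w ↦ ?_
  rw [AddSubmonoid.mem_closure_triple]
  constructor
  · rintro ⟨z, x, y, rfl⟩
    obtain ⟨p, hp, hpw⟩ := exists_mem_mod_eq hs hcard hinj (z * s + x * q + y * r)
    refine ⟨p, hp, hpw, ?_⟩
    have hxy : (z * s + x * q + y * r) % s = (x * q + y * r) % s := by
      rw [add_assoc, Nat.mul_add_mod_self_right]
    by_cases hpxy : (x, y) = p
    · subst hpxy
      dsimp only
      omega
    · have := hmin p hp (x, y) hpxy (hpw.trans hxy)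
      dsimp only at this
      omega
  · rintro ⟨p, hp, hpw, hle⟩
    obtain ⟨z, hz⟩ := (Nat.modEq_iff_dvd' hle).1 hpw
    refine ⟨z, p.1, p.2, ?_⟩
    rw [← Nat.sub_add_cancel hle, hz]
    ring

section Lattice

variable {a n e : ℤ}

lemma exists_lattice_coords (he : a * (n - 2) = 6 * n - 1 + 4 * e) {u v : ℤ}
    (h : a * n * (n - 2) + 1 ∣ u * (a * (n + 1) * (n - 1) + 1) + v * (a * (n + 2) * n + 1)) :
    ∃ α β : ℤ, u = 4 * n * α - (n + 1) * β ∧ v = (2 * n + e) * β - (2 * n - 1) * α := by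
  have hcop : IsCoprime (a * n * (n - 2) + 1) a := ⟨1, -(n * (n - 2)), by ring⟩
  obtain ⟨β, hβ⟩ : a * n * (n - 2) + 1 ∣ (2 * n - 1) * u + 4 * n * v := by
    refine hcop.dvd_of_dvd_mul_left ?_
    convert dvd_sub h (dvd_mul_left _ (u + v)) using 1
    ring
  obtain ⟨k, rfl⟩ : Odd n := by
    have : Odd (a * (n - 2)) := he ▸ ⟨3 * n - 1 + 2 * e, by ring⟩
    simpa [Int.odd_sub] using (Int.odd_mul.1 this).2
  have h4 : 4 ∣ u + (2 * k + 2) * β :=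
    ⟨(6 * k ^ 2 + 6 * k + 2 + 2 * k * e + e) * β - k * u - (2 * k + 1) * v, by
      linear_combination hβ + (2 * k + 1) * β * he⟩
  have hn : 2 * k + 1 ∣ u + (2 * k + 2) * β :=
    ⟨2 * u + 4 * v - a * (2 * k - 1) * β + β, by linear_combination -hβ⟩
  have hcop4 : IsCoprime (4 : ℤ) (2 * k + 1) := ⟨k ^ 2, 1 - 2 * k, by ring⟩
  obtain ⟨α, hα⟩ := hcop4.mul_dvd h4 hn
  refine ⟨α, β, by linear_combination hα, ?_⟩
  have hk : (4 * (2 * k + 1) : ℤ) ≠ 0 := by omega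
  refine mul_left_cancel₀ hk ?_
  linear_combination hβ - (4 * k + 1) * hα + (2 * k + 1) * β * he

lemma lattice_combination_eq (he : a * (n - 2) = 6 * n - 1 + 4 * e) (α β : ℤ) :
    (4 * n * α - (n + 1) * β) * (a * (n + 1) * (n - 1) + 1) +
        ((2 * n + e) * β - (2 * n - 1) * α) * (a * (n + 2) * n + 1) =
      ((2 * n + 1) * α + (a + e + n - 1) * β) * (a * n * (n - 2) + 1) := by
  linear_combination (-(a * n) * β) * he

end Lattice

lemma lattice_coeff_pos {n e c x y α β : ℤ} (hn : 1 ≤ n) (he : 0 ≤ e) (hc : 0 < c)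
    (hx : x < 4 * n) (hy : y < 2 * n + e) (hxy : x + 1 < 3 * n ∨ y ≤ e)
    (hx' : 0 ≤ x + (4 * n * α - (n + 1) * β))
    (hy' : 0 ≤ y + ((2 * n + e) * β - (2 * n - 1) * α))
    (hne : (α, β) ≠ 0) :
    0 < (2 * n + 1) * α + c * β := by
  rcases lt_trichotomy β 0 with hβ | rfl | hβ
  · have hα : α < 0 := by
      by_contra! hα
      nlinarith
    have hαβ : α ≤ β := by
      by_contra! hαβ
      nlinarith
    obtain rfl : α = -1 := by
      by_contra hα1
      have hα2 : α ≤ -2 := by omega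
      nlinarith [mul_le_mul_of_nonneg_left hαβ (by omega : 0 ≤ n + 1)]
    obtain rfl : β = -1 := by omega
    -- `α = β = -1` translates by `(1 - 3n, -1 - e)`, which leaves `ℕ²` from every point of the
    -- L-shape
    omega
  · rcases lt_trichotomy α 0 with hα | rfl | hα
    · nlinarith
    · exact absurd rfl hne
    · nlinarith
  · have hα : 0 ≤ α := by
      by_contra! hα
      nlinarith
    nlinarith

lemma cast_twoStepStar {R : Type*} [CommRing R] (a : ℕ) {n : ℕ} (hn : 2 ≤ n) :
    (twoStepStar a n : R) = a * n * (n - 2) + 1 := by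
  rw [twoStepStar]
  push_cast [Nat.cast_sub hn]
  ring

lemma exists_excess {a n : ℕ} (hn : 3 ≤ n) (hbig : 6 * n - 1 ≤ a * (n - 2))
    (hmod : (a % 4 = 1 ∧ n % 4 = 3) ∨ (a % 4 = 3 ∧ n % 4 = 1)) :
    ∃ e, a * (n - 2) = 6 * n - 1 + 4 * e := by
  have hmod' : a * (n - 2) % 4 = 1 := by
    rw [Nat.mul_mod]
    rcases hmod with ⟨ha, hn'⟩ | ⟨ha, hn'⟩
    · rw [ha, (by omega : (n - 2) % 4 = 1)]
    · rw [ha, (by omega : (n - 2) % 4 = 3)]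
  exact ⟨(a * (n - 2) - (6 * n - 1)) / 4, by omega⟩

lemma cast_excess {R : Type*} [CommRing R] {a n e : ℕ} (hn : 2 ≤ n)
    (he : a * (n - 2) = 6 * n - 1 + 4 * e) : (a : R) * (n - 2) = 6 * n - 1 + 4 * e := by
  have := congrArg (Nat.cast : ℕ → R) he
  push_cast [Nat.cast_sub hn, Nat.cast_sub (by omega : 1 ≤ 6 * n)] at this
  exact this

def aperyLShape (n e : ℕ) : Finset (ℕ × ℕ) :=
  range (3 * n - 1) ×ˢ range (2 * n + e) ∪ Ico (3 * n - 1) (4 * n) ×ˢ range (e + 1)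

lemma disjoint_aperyLShape_parts (n e : ℕ) :
    Disjoint (range (3 * n - 1) ×ˢ range (2 * n + e))
      (Ico (3 * n - 1) (4 * n) ×ˢ range (e + 1)) :=
  disjoint_product.2 <| .inl <| by
    rw [range_eq_Ico]
    exact Ico_disjoint_Ico_consecutive _ _ _

lemma mem_aperyLShape {n e : ℕ} {p : ℕ × ℕ} :
    p ∈ aperyLShape n e ↔
      p.1 < 4 * n ∧ p.2 < 2 * n + e ∧ (p.1 + 1 < 3 * n ∨ p.2 ≤ e) := by
  simp only [aperyLShape, mem_union, mem_product, mem_range, mem_Ico]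
  omega

lemma card_aperyLShape {a n e : ℕ} (hn : 2 ≤ n) (he : a * (n - 2) = 6 * n - 1 + 4 * e) :
    #(aperyLShape n e) = twoStepStar a n := by
  simp only [aperyLShape, card_union_of_disjoint (disjoint_aperyLShape_parts n e), card_product,
    card_range, Nat.card_Ico]
  zify [(by omega : 1 ≤ 3 * n), (by omega : 3 * n - 1 ≤ 4 * n)]
  rw [cast_twoStepStar a hn]
  linear_combination (-(n : ℤ)) * cast_excess (R := ℤ) hn he

theorem aperyLShape_minimal {a n e : ℕ} (hn : 2 ≤ n) (he : a * (n - 2) = 6 * n - 1 + 4 * e)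
    {p : ℕ × ℕ} (hp : p ∈ aperyLShape n e) {p' : ℕ × ℕ} (hne : p' ≠ p)
    (hmod : (p.1 * twoStepStar a (n + 1) + p.2 * twoStepStar a (n + 2)) % twoStepStar a n =
      (p'.1 * twoStepStar a (n + 1) + p'.2 * twoStepStar a (n + 2)) % twoStepStar a n) :
    p.1 * twoStepStar a (n + 1) + p.2 * twoStepStar a (n + 2) + twoStepStar a n ≤
      p'.1 * twoStepStar a (n + 1) + p'.2 * twoStepStar a (n + 2) := by
  obtain ⟨hx, hy, hxy⟩ := mem_aperyLShape.1 hp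
  have heZ : (a : ℤ) * (n - 2) = 6 * n - 1 + 4 * e := cast_excess hn he
  have hdvd := Nat.modEq_iff_dvd.1 hmod
  zify
  push_cast [cast_twoStepStar a hn, cast_twoStepStar a (by omega : 2 ≤ n + 1),
    cast_twoStepStar a (by omega : 2 ≤ n + 2)] at hdvd ⊢
  set u : ℤ := p'.1 - p.1 with hu
  set v : ℤ := p'.2 - p.2 with hv
  obtain ⟨α, β, huαβ, hvαβ⟩ := exists_lattice_coords heZ (u := u) (v := v) (by
    convert hdvd using 1
    ring)
  have hpos : 0 < (2 * (n : ℤ) + 1) * α + (a + e + n - 1) * β := by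
    have hc : (0 : ℤ) < a + e + n - 1 := by omega
    have hx' : (0 : ℤ) ≤ p.1 + (4 * n * α - (n + 1) * β) := by rw [← huαβ]; omega
    have hy' : (0 : ℤ) ≤ p.2 + ((2 * n + e) * β - (2 * n - 1) * α) := by
      rw [← hvαβ]; omega
    refine lattice_coeff_pos (by omega) (by omega) hc (by exact_mod_cast hx) (by exact_mod_cast hy)
      (by exact_mod_cast hxy) hx' hy' fun h0 ↦ ?_
    obtain ⟨rfl, rfl⟩ : α = 0 ∧ β = 0 := Prod.ext_iff.1 h0
    simp only [mul_zero, sub_zero] at huαβ hvαβ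
    exact hne (Prod.ext (by omega) (by omega))
  have hs : (0 : ℤ) < a * n * (n - 2) + 1 := by
    have : (0 : ℤ) ≤ n - 2 := by omega
    positivity
  have key := lattice_combination_eq heZ α β
  rw [← huαβ, ← hvαβ, hu, hv] at key
  nlinarith [mul_le_mul_of_nonneg_right (Int.add_one_le_of_lt hpos) hs.le]

lemma sum_range_natCast_mul_two {R : Type*} [CommRing R] (k : ℕ) :
    (∑ i ∈ range k, (i : R)) * 2 = k * (k - 1) := by
  induction k with
  | zero => simp
  | succ k ih =>
    rw [sum_range_succ, add_mul, ih]
    push_cast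
    ring

lemma sum_product_linear {R : Type*} [CommSemiring R] (C D : Finset ℕ) (q r : R) :
    ∑ p ∈ C ×ˢ D, ((p.1 : R) * q + p.2 * r) =
      #D * (∑ x ∈ C, (x : R)) * q + #C * (∑ y ∈ D, (y : R)) * r := by
  rw [sum_product]
  simp only [sum_add_distrib, sum_const, nsmul_eq_mul, ← sum_mul, ← mul_sum]
  ring

lemma two_mul_sum_aperyLShape {n : ℕ} (hn : 1 ≤ n) (e : ℕ) (q r : ℚ) :
    2 * ∑ p ∈ aperyLShape n e, ((p.1 : ℚ) * q + p.2 * r) =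
      (2 * n + e) * (3 * n - 1) * (3 * n - 2) * q +
        (3 * n - 1) * (2 * n + e) * (2 * n + e - 1) * r +
        (e + 1) * (7 * n - 2) * (n + 1) * q + (n + 1) * (e + 1) * e * r := by
  rw [aperyLShape, sum_union (disjoint_aperyLShape_parts n e), sum_product_linear,
    sum_product_linear, sum_Ico_eq_sub _ (by omega : 3 * n - 1 ≤ 4 * n)]
  have h₁ := sum_range_natCast_mul_two (R := ℚ) (3 * n - 1)
  have h₂ := sum_range_natCast_mul_two (R := ℚ) (2 * n + e)
  have h₃ := sum_range_natCast_mul_two (R := ℚ) (4 * n)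
  have h₄ := sum_range_natCast_mul_two (R := ℚ) (e + 1)
  simp only [card_range, Nat.card_Ico]
  push_cast [Nat.cast_sub (by omega : 1 ≤ 3 * n), Nat.cast_sub (by omega : 3 * n - 1 ≤ 4 * n)]
    at h₁ h₂ h₃ h₄ ⊢
  linear_combination (2 * n + e) * q * h₁ + (3 * n - 1) * r * h₂ + (e + 1) * q * (h₃ - h₁) +
    (n + 1) * r * h₄

theorem sylvester_twoStepStar_case3_general (a n : ℕ) (hn : 3 ≤ n) (hbig : 6 * n - 1 ≤ a * (n - 2)) (hmod : (a % 4 = 1 ∧ n % 4 = 3) ∨ (a % 4 = 3 ∧ n % 4 = 1)) :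
    (sylvesterNumber
        {twoStepStar a n, twoStepStar a (n + 1), twoStepStar a (n + 2)} : ℚ) =
      (((a : ℚ) ^ 2 + 16 * a - 12) * n ^ 3 - (12 * (a : ℚ) + 8) * n ^ 2 - (4 * (a : ℚ) ^ 2 + 14 * a - 23) * n + 4 * a - 6) / 8 := by
  obtain ⟨e, he⟩ := exists_excess hn hbig hmod
  have hn₂ : 2 ≤ n := by omega
  have hs : 0 < twoStepStar a n := Nat.succ_pos _
  have hsum := two_mul_sum_eq_of_minimal hs (card_aperyLShape hn₂ he)
    fun _ hp _ ↦ aperyLShape_minimal hn₂ he hp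
  have hsumQ := congrArg (Nat.cast : ℕ → ℚ) hsum
  push_cast [Nat.cast_sub (le_add_left hs)] at hsumQ
  rw [two_mul_sum_aperyLShape (by omega), cast_twoStepStar a hn₂,
    cast_twoStepStar a (by omega : 2 ≤ n + 1),
    cast_twoStepStar a (by omega : 2 ≤ n + 2)] at hsumQ
  push_cast at hsumQ
  have heQ : (e : ℚ) = (a * (n - 2) - 6 * n + 1) / 4 := by
    linear_combination -cast_excess (R := ℚ) hn₂ he / 4
  rw [heQ] at hsumQ
  have hsQ : (twoStepStar a n : ℚ) ≠ 0 := by exact_mod_cast hs.ne'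
  rw [cast_twoStepStar a hn₂] at hsQ
  refine mul_left_cancel₀ hsQ ?_
  linear_combination -hsumQ / 2

theorem sylvester_twoStepStar_case3 (a n : ℕ) (ha : 5 ≤ a) (hn : 3 ≤ n) (hbig : 6 * n - 1 ≤ a * (n - 2)) (hmod : (a % 4 = 1 ∧ n % 4 = 3) ∨ (a % 4 = 3 ∧ n % 4 = 1)) :
    (sylvesterNumber
        {twoStepStar a n, twoStepStar a (n + 1), twoStepStar a (n + 2)} : ℚ) =
      (((a : ℚ) ^ 2 + 16 * a - 12) * n ^ 3 - (12 * (a : ℚ) + 8) * n ^ 2 - (4 * (a : ℚ) ^ 2 + 14 * a - 23) * n + 4 * a - 6) / 8 :=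
  sylvester_twoStepStar_case3_general a n hn hbig hmod
end

section
/- Let a and n be integers with a ≥ 5, n ≥ 3, a(n−2) ≥ 8n−2, and either (a ≡ 1 and n ≡ 0 (mod 4)), or (a ≡ 2 (mod 4) and n odd), or (a ≡ 3 and n ≡ 0 (mod 4)). Then the Sylvester number (genus) of the triple {S_{a,n}, S_{a,n+1}, S_{a,n+2}} equals (1/8)·((a²+16a)n³ − (12a+16)n² − (4a²+14a−20)n + 4a − 4). -/
open Finset

section Apery

variable {ι : Type*} {A : ℕ} {D : Finset ι} {w : ι → ℕ}

theorem image_mod_eq_range_s18 (hA : 0 < A) (hinj : Set.InjOn (fun p => w p % A) D)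
    (hcard : #D = A) : D.image (fun p => w p % A) = range A := by
  classical
  refine eq_of_subset_of_card_le (fun r hr => ?_) ?_
  · obtain ⟨p, -, rfl⟩ := mem_image.1 hr
    exact mem_range.2 (Nat.mod_lt _ hA)
  · rw [card_range, card_image_of_injOn hinj, hcard]

theorem ncard_compl_eq_sum_div {S : Set ℕ} (hA : 0 < A)
    (hS : ∀ m, m ∈ S ↔ ∃ p ∈ D, ∃ k, m = w p + k * A)
    (hinj : Set.InjOn (fun p => w p % A) D) (hcard : #D = A) :
    Sᶜ.ncard = ∑ p ∈ D, w p / A := by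
  classical
  have hgaps : Sᶜ = ↑(D.biUnion fun p => {m ∈ range (w p) | m ≡ w p [MOD A]}) := by
    ext m
    simp only [Set.mem_compl_iff, hS, coe_biUnion, coe_filter, mem_range, Set.mem_iUnion,
      exists_prop, not_exists, not_and]
    constructor
    · intro hm
      obtain ⟨p, hp, hpm⟩ := mem_image.1 <|
        (image_mod_eq_range_s18 hA hinj hcard).symm ▸ mem_range.2 (Nat.mod_lt m hA)
      refine ⟨p, hp, lt_of_not_ge fun hle => ?_, hpm.symm⟩
      obtain ⟨k, hk⟩ := (Nat.modEq_iff_dvd' hle).1 hpm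
      exact hm p hp k (by rw [mul_comm, ← hk]; omega)
    · rintro ⟨p, hp, hlt, hpm⟩ q hq k rfl
      have hqp : q = p := hinj hq hp (by simpa [Nat.ModEq] using hpm)
      subst hqp
      omega
  rw [hgaps, Set.ncard_coe_finset, card_biUnion]
  · refine sum_congr rfl fun p _ => ?_
    rw [← Nat.count_eq_card_filter_range, Nat.count_modEq_card _ hA]
    simp
  · intro p hp q hq hpq
    simp only [Function.onFun, disjoint_left, mem_filter]
    intro m hmp hmq
    exact hpq (hinj hp hq (hmp.2.symm.trans hmq.2))

theorem two_mul_sum_eq_two_mul_mul_sum_div_add (hA : 0 < A)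
    (hinj : Set.InjOn (fun p => w p % A) D) (hcard : #D = A) :
    2 * ∑ p ∈ D, w p = 2 * A * ∑ p ∈ D, w p / A + A * (A - 1) := by
  classical
  have hmod : ∑ p ∈ D, w p % A = ∑ r ∈ range A, r := by
    rw [← image_mod_eq_range_s18 hA hinj hcard, sum_image hinj]
  have hsplit : ∑ p ∈ D, w p = A * ∑ p ∈ D, w p / A + ∑ p ∈ D, w p % A := by
    rw [mul_sum, ← sum_add_distrib]
    exact sum_congr rfl fun p _ => (Nat.div_add_mod (w p) A).symm
  rw [hsplit, hmod, ← sum_range_id_mul_two]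
  ring

end Apery

def lShape (X c s : ℕ) : Finset (ℕ × ℕ) := range X ×ˢ range c ∪ {X} ×ˢ range s

section lShape

variable {X c s : ℕ}

theorem mem_lShape {p : ℕ × ℕ} :
    p ∈ lShape X c s ↔ p.1 < X ∧ p.2 < c ∨ p.1 = X ∧ p.2 < s := by
  simp only [lShape, mem_union, mem_product, mem_range, mem_singleton]

theorem disjoint_lShape : Disjoint (range X ×ˢ range c) ({X} ×ˢ range s) := by
  simp only [disjoint_left, mem_product, mem_range, mem_singleton]
  omega

theorem card_lShape : #(lShape X c s) = X * c + s := by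
  rw [lShape, card_union_of_disjoint disjoint_lShape]
  simp

theorem sum_lShape (B C : ℕ) :
    ∑ p ∈ lShape X c s, (p.1 * B + p.2 * C) =
      c * (∑ i ∈ range X, i) * B + X * (∑ j ∈ range c, j) * C +
        s * X * B + (∑ j ∈ range s, j) * C := by
  rw [lShape, sum_union disjoint_lShape, sum_product, sum_product]
  simp only [sum_add_distrib, sum_const, card_range, smul_eq_mul, ← sum_mul, ← mul_sum,
    sum_singleton, card_singleton]
  ring

theorem exists_mem_lShape_add_mul {A B C α β γ δ : ℕ} (hA : 0 < A)
    (h₁ : (X + 1) * B = α * A + δ * C) (hα : 0 < α)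
    (h₂ : c * C = β * A + B) (hβ : 0 < β)
    (h₃ : X * B + s * C = γ * A) (hγ : 0 < γ) (x y : ℕ) :
    ∃ p ∈ lShape X c s, ∃ j, x * B + y * C = p.1 * B + p.2 * C + j * A := by
  induction hv : x * B + y * C using Nat.strong_induction_on generalizing x y with
  | _ v ih =>
  subst hv
  by_cases hy : y < c
  · rcases lt_trichotomy x X with hx | rfl | hx
    · exact ⟨(x, y), mem_lShape.2 (Or.inl ⟨hx, hy⟩), 0, by simp⟩
    · by_cases hys : y < s
      · exact ⟨(x, y), mem_lShape.2 (Or.inr ⟨rfl, hys⟩), 0, by simp⟩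
      · obtain ⟨y', rfl⟩ : ∃ y', y = y' + s := ⟨y - s, by omega⟩
        have heq : x * B + (y' + s) * C = 0 * B + y' * C + γ * A := by
          linear_combination h₃
        obtain ⟨p, hp, j, hj⟩ := ih _ (by rw [heq]; nlinarith) 0 y' rfl
        exact ⟨p, hp, j + γ, by rw [heq, hj]; ring⟩
    · obtain ⟨x', rfl⟩ : ∃ x', x = x' + (X + 1) := ⟨x - (X + 1), by omega⟩
      have heq : (x' + (X + 1)) * B + y * C = x' * B + (y + δ) * C + α * A := by
        linear_combination h₁
      obtain ⟨p, hp, j, hj⟩ := ih _ (by rw [heq]; nlinarith) x' (y + δ) rfl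
      exact ⟨p, hp, j + α, by rw [heq, hj]; ring⟩
  · obtain ⟨y', rfl⟩ : ∃ y', y = y' + c := ⟨y - c, by omega⟩
    have heq : x * B + (y' + c) * C = (x + 1) * B + y' * C + β * A := by
      linear_combination h₂
    obtain ⟨p, hp, j, hj⟩ := ih _ (by rw [heq]; nlinarith) (x + 1) y' rfl
    exact ⟨p, hp, j + β, by rw [heq, hj]; ring⟩

end lShape

theorem AddSubmonoid.mem_closure_triple_s18 {M : Type*} [AddCommMonoid M] {a b c m : M} :
    m ∈ closure ({a, b, c} : Set M) ↔ ∃ k x y : ℕ, k • a + x • b + y • c = m := by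
  rw [← Set.singleton_union, closure_union, mem_sup]
  simp_rw [mem_closure_singleton, mem_closure_pair, exists_exists_eq_and, add_assoc]
  constructor
  · rintro ⟨k, _, ⟨x, y, rfl⟩, rfl⟩
    exact ⟨k, x, y, rfl⟩
  · rintro ⟨k, x, y, rfl⟩
    exact ⟨k, _, ⟨x, y, rfl⟩, rfl⟩

section twoStepStar

variable (a d : ℕ)

theorem twoStepStar_add_two : twoStepStar a (d + 2) = a * (d + 2) * d + 1 := by
  simp [twoStepStar]

theorem twoStepStar_add_three :
    twoStepStar a (d + 3) = twoStepStar a (d + 2) + a * (2 * d + 3) := by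
  simp only [twoStepStar, show d + 3 - 2 = d + 1 by omega, Nat.add_sub_cancel]
  ring

theorem twoStepStar_add_four :
    twoStepStar a (d + 4) = twoStepStar a (d + 2) + a * (4 * d + 8) := by
  simp only [twoStepStar, show d + 4 - 2 = d + 2 by omega, Nat.add_sub_cancel]
  ring

theorem twoStepStar_relation₁ :
    (4 * d + 8) * twoStepStar a (d + 3) =
      (2 * d + 5) * twoStepStar a (d + 2) + (2 * d + 3) * twoStepStar a (d + 4) := by
  rw [twoStepStar_add_four, twoStepStar_add_three]
  ring

/- Modulo `A = twoStepStar a (d + 2)` the element `a` has inverse `-d (d + 2)`, and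
`(2d + 3)² - (d + 1)(4d + 8) = 1`, so `x ≡ (2d + 3) r / a` and `y ≡ -(d + 1) r / a` work. -/
theorem exists_mod_twoStepStar_eq (r : ℕ) :
    ∃ x y : ℕ, (x * twoStepStar a (d + 3) + y * twoStepStar a (d + 4)) % twoStepStar a (d + 2) =
      r % twoStepStar a (d + 2) := by
  rw [twoStepStar_add_four, twoStepStar_add_three]
  generalize hA : twoStepStar a (d + 2) = A
  rw [twoStepStar_add_two] at hA
  have : NeZero A := ⟨by omega⟩
  have hunit : (a : ZMod A) * -(d * (d + 2)) = 1 := by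
    have h : ((a * (d + 2) * d + 1 : ℕ) : ZMod A) = 0 := hA ▸ ZMod.natCast_self A
    push_cast at h
    linear_combination -h
  refine ⟨((2 * d + 3) * r * -(d * (d + 2)) : ZMod A).val,
    (-(d + 1) * r * -(d * (d + 2)) : ZMod A).val, ?_⟩
  rw [← ZMod.natCast_eq_natCast_iff']
  push_cast
  simp only [ZMod.natCast_val, ZMod.cast_id', id, ZMod.natCast_self]
  linear_combination (r : ZMod A) * hunit

end twoStepStar

section twoStepStarOfEq

variable {a d s : ℕ}

theorem twoStepStar_relation₂ (h : a * d + 2 = 4 * (s + 2 * d + 4)) :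
    (s + 2 * d + 4) * twoStepStar a (d + 4) =
      (a + s + 2 * d + 3) * twoStepStar a (d + 2) + twoStepStar a (d + 3) := by
  rw [twoStepStar_add_four, twoStepStar_add_three, twoStepStar_add_two]
  linear_combination (a * (d + 2)) * h.symm

theorem twoStepStar_relation₃ (h : a * d + 2 = 4 * (s + 2 * d + 4)) :
    (4 * d + 7) * twoStepStar a (d + 3) + (s + 1) * twoStepStar a (d + 4) =
      (a + s + 4 * d + 8) * twoStepStar a (d + 2) := by
  rw [twoStepStar_add_four, twoStepStar_add_three, twoStepStar_add_two]
  linear_combination (a * (d + 2)) * h.symm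

theorem card_lShape_eq_twoStepStar (h : a * d + 2 = 4 * (s + 2 * d + 4)) :
    #(lShape (4 * d + 7) (s + 2 * d + 4) (s + 1)) = twoStepStar a (d + 2) := by
  rw [card_lShape, twoStepStar_add_two]
  linear_combination (d + 2) * h.symm

theorem two_mul_twoStepStar_mul_sylvesterNumber_add (h : a * d + 2 = 4 * (s + 2 * d + 4)) :
    2 * twoStepStar a (d + 2) *
        sylvesterNumber {twoStepStar a (d + 2), twoStepStar a (d + 3), twoStepStar a (d + 4)} +
      twoStepStar a (d + 2) * (twoStepStar a (d + 2) - 1) =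
    (s + 2 * d + 4) * ((4 * d + 7) * (4 * d + 6)) * twoStepStar a (d + 3) +
      (4 * d + 7) * ((s + 2 * d + 4) * (s + 2 * d + 3)) * twoStepStar a (d + 4) +
      2 * (s + 1) * (4 * d + 7) * twoStepStar a (d + 3) + (s + 1) * s * twoStepStar a (d + 4) := by
  set A := twoStepStar a (d + 2)
  set B := twoStepStar a (d + 3)
  set C := twoStepStar a (d + 4)
  set D := lShape (4 * d + 7) (s + 2 * d + 4) (s + 1) with hD
  have hA : 0 < A := by simp [A, twoStepStar_add_two]
  have hcard : #D = A := card_lShape_eq_twoStepStar h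
  have hreduce := exists_mem_lShape_add_mul hA (twoStepStar_relation₁ a d) (by omega)
    (twoStepStar_relation₂ h) (by omega) (twoStepStar_relation₃ h) (by omega)
  have hinj : Set.InjOn (fun p : ℕ × ℕ => (p.1 * B + p.2 * C) % A) D := by
    classical
    refine injOn_of_card_image_eq (le_antisymm card_image_le ?_)
    have hsurj : range A ⊆ D.image fun p : ℕ × ℕ => (p.1 * B + p.2 * C) % A := fun r hr => by
      obtain ⟨x, y, hxy⟩ := exists_mod_twoStepStar_eq a d r
      obtain ⟨p, hp, j, hj⟩ := hreduce x y
      refine mem_image.2 ⟨p, hp, ?_⟩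
      rw [← Nat.mod_eq_of_lt (mem_range.1 hr)]
      exact (Nat.add_mul_mod_self_right _ j A).symm.trans (hj ▸ hxy)
    simpa [hcard] using card_le_card hsurj
  have hS : ∀ m, m ∈ (AddSubmonoid.closure ({A, B, C} : Set ℕ) : Set ℕ) ↔
      ∃ p ∈ D, ∃ k, m = p.1 * B + p.2 * C + k * A := by
    intro m
    rw [SetLike.mem_coe, AddSubmonoid.mem_closure_triple_s18]
    constructor
    · rintro ⟨k, x, y, rfl⟩
      obtain ⟨p, hp, j, hj⟩ := hreduce x y
      exact ⟨p, hp, j + k, by simp only [smul_eq_mul]; rw [add_assoc, hj]; ring⟩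
    · rintro ⟨p, -, k, rfl⟩
      exact ⟨k, p.1, p.2, by simp only [smul_eq_mul]; ring⟩
  have hsum := two_mul_sum_eq_two_mul_mul_sum_div_add hA hinj hcard
  rw [← ncard_compl_eq_sum_div hA hS hinj hcard, hD, sum_lShape] at hsum
  have hX : (∑ i ∈ range (4 * d + 7), i) * 2 = (4 * d + 7) * (4 * d + 6) :=
    sum_range_id_mul_two _
  have hc : (∑ i ∈ range (s + 2 * d + 4), i) * 2 = (s + 2 * d + 4) * (s + 2 * d + 3) :=
    sum_range_id_mul_two _
  have hs : (∑ i ∈ range (s + 1), i) * 2 = (s + 1) * s := sum_range_id_mul_two _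
  exact hsum.symm.trans (by rw [← hX, ← hc, ← hs]; ring)

theorem sylvesterNumber_twoStepStar (h : a * d + 2 = 4 * (s + 2 * d + 4)) :
    (sylvesterNumber {twoStepStar a (d + 2), twoStepStar a (d + 3), twoStepStar a (d + 4)} : ℚ) =
      (((a : ℚ) ^ 2 + 16 * a) * (d + 2) ^ 3 - (12 * (a : ℚ) + 16) * (d + 2) ^ 2 -
        (4 * (a : ℚ) ^ 2 + 14 * a - 20) * (d + 2) + 4 * a - 4) / 8 := by
  have H := congrArg (Nat.cast : ℕ → ℚ) (two_mul_twoStepStar_mul_sylvesterNumber_add h)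
  have hs : (s : ℚ) = (a * d - 8 * d - 14) / 4 := by
    have := congrArg (Nat.cast : ℕ → ℚ) h
    push_cast at this
    linarith
  generalize sylvesterNumber _ = g at H ⊢
  rw [twoStepStar_add_four, twoStepStar_add_three, twoStepStar_add_two, Nat.add_sub_cancel] at H
  push_cast at H
  rw [hs] at H
  refine mul_left_cancel₀ (by positivity : (2 * ((a : ℚ) * (d + 2) * d + 1)) ≠ 0) ?_
  linear_combination H

end twoStepStarOfEq

theorem sylvester_twoStepStar_case4_general (a n : ℕ) (hn : 3 ≤ n) (hbig : 8 * n - 2 ≤ a * (n - 2)) (hmod : (a % 4 = 1 ∧ n % 4 = 0) ∨ (a % 4 = 2 ∧ n % 2 = 1) ∨ (a % 4 = 3 ∧ n % 4 = 0)) :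
    (sylvesterNumber
        {twoStepStar a n, twoStepStar a (n + 1), twoStepStar a (n + 2)} : ℚ) =
      (((a : ℚ) ^ 2 + 16 * a) * n ^ 3 - (12 * (a : ℚ) + 16) * n ^ 2 - (4 * (a : ℚ) ^ 2 + 14 * a - 20) * n + 4 * a - 4) / 8 := by
  obtain ⟨d, rfl⟩ : ∃ d, n = d + 2 := ⟨n - 2, by omega⟩
  have hmod4 : a * d % 4 = 2 := by
    rcases hmod with ⟨ha4, hn4⟩ | ⟨ha4, hn4⟩ | ⟨ha4, hn4⟩ <;> rw [Nat.mul_mod, ha4] <;> omega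
  obtain ⟨s, hs⟩ : ∃ s, a * d + 2 = 4 * (s + 2 * d + 4) :=
    ⟨(a * d + 2) / 4 - (2 * d + 4), by rw [Nat.add_sub_cancel] at hbig; omega⟩
  rw [sylvesterNumber_twoStepStar hs]
  push_cast
  ring

theorem sylvester_twoStepStar_case4 (a n : ℕ) (ha : 5 ≤ a) (hn : 3 ≤ n) (hbig : 8 * n - 2 ≤ a * (n - 2)) (hmod : (a % 4 = 1 ∧ n % 4 = 0) ∨ (a % 4 = 2 ∧ n % 2 = 1) ∨ (a % 4 = 3 ∧ n % 4 = 0)) :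
    (sylvesterNumber
        {twoStepStar a n, twoStepStar a (n + 1), twoStepStar a (n + 2)} : ℚ) =
      (((a : ℚ) ^ 2 + 16 * a) * n ^ 3 - (12 * (a : ℚ) + 16) * n ^ 2 - (4 * (a : ℚ) ^ 2 + 14 * a - 20) * n + 4 * a - 4) / 8 :=
  sylvester_twoStepStar_case4_general a n hn hbig hmod
end

section
/- Let a₁, a₂, a₃ be positive integers with 3 ≤ a₁ < a₂ < a₃ and gcd(a₁, a₂, a₃) = 1, and let y₀, y₁, z₀, z₁ be nonnegative integers satisfying: (i) 0 ≤ y₁ ≤ y₀ and 0 ≤ z₀ ≤ z₁; (ii) a₁ = y₀·z₀ + y₁·(z₁−z₀); (iii) y₀·a₂ − (z₁−z₀)·a₃ ≡ 0 (mod a₁) and y₀·a₂ > (z₁−z₀)·a₃; (iv) y₁·a₂ + z₀·a₃ ≡ 0 (mod a₁). Let R be the staircase region of pairs (y, z) of nonnegative integers with either (0 ≤ y ≤ y₀−1 and 0 ≤ z ≤ z₀−1) or (0 ≤ y ≤ y₁−1 and z₀ ≤ z ≤ z₁−1). Then the map (y, z) ↦ (y·a₂ + z·a₃) mod a₁ is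 a bijection from R onto the set of residue classes modulo a₁; in particular, the a₁ values y·a₂ + z·a₃ for (y, z) ∈ R form a complete residue system modulo a₁. -/
/-!
The pairs `(u, v) ∈ ℤ²` with `a₁ ∣ u·a₂ + v·a₃` form a lattice of index `a₁`, because
`gcd(a₁, a₂, a₃) = 1`. By (iii) and (iv) it contains `P = (y₀, z₀ − z₁)` and `Q = (y₁, z₀)`, whose
determinant is `a₁` by (ii), so by Cramer's rule `P` and `Q` span it. The staircase is a
fundamental domain of the lattice spanned by `P` and `Q`: the difference of two of its points is
never a nonzero combination `m·P + k·Q`. Hence the map is injective on the `a₁` points of the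
staircase, and so bijective onto `ZMod a₁`.
-/

open Finset

theorem ZMod.eq_zero_of_mul_natCast_eq_zero {n a b : ℕ} (h : Nat.gcd n (Nat.gcd a b) = 1)
    {t : ZMod n} (ha : t * a = 0) (hb : t * b = 0) : t = 0 := by
  have hunit : IsUnit (Nat.gcd a b : ZMod n) :=
    (ZMod.isUnit_iff_coprime _ _).mpr (Nat.Coprime.symm h)
  have hbezout : (Nat.gcd a b : ZMod n) = a * Nat.gcdA a b + b * Nat.gcdB a b := by
    exact_mod_cast congrArg (Int.cast : ℤ → ZMod n) (Nat.gcd_eq_gcd_ab a b)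
  refine hunit.mul_left_eq_zero.mp ?_
  rw [hbezout]
  linear_combination (Nat.gcdA a b : ZMod n) * ha + (Nat.gcdB a b : ZMod n) * hb

theorem Int.exists_eq_mul_add_mul_of_det_dvd {p₁ p₂ q₁ q₂ u v : ℤ}
    (hdet : p₁ * q₂ - q₁ * p₂ ≠ 0) (hu : p₁ * q₂ - q₁ * p₂ ∣ q₂ * u - q₁ * v)
    (hv : p₁ * q₂ - q₁ * p₂ ∣ p₁ * v - p₂ * u) :
    ∃ m k : ℤ, u = m * p₁ + k * q₁ ∧ v = m * p₂ + k * q₂ := by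
  obtain ⟨m, hm⟩ := hu
  obtain ⟨k, hk⟩ := hv
  refine ⟨m, k, mul_left_cancel₀ hdet ?_, mul_left_cancel₀ hdet ?_⟩
  · linear_combination p₁ * hm + q₁ * hk
  · linear_combination p₂ * hm + q₂ * hk

theorem exists_eq_mul_add_mul_of_det_eq {n : ℕ} (hn : n ≠ 0) {α β : ZMod n}
    (hαβ : ∀ t : ZMod n, t * α = 0 → t * β = 0 → t = 0) {p₁ p₂ q₁ q₂ u v : ℤ}
    (hdet : p₁ * q₂ - q₁ * p₂ = n) (hP : (p₁ : ZMod n) * α + p₂ * β = 0)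
    (hQ : (q₁ : ZMod n) * α + q₂ * β = 0) (huv : (u : ZMod n) * α + v * β = 0) :
    ∃ m k : ℤ, u = m * p₁ + k * q₁ ∧ v = m * p₂ + k * q₂ := by
  have hdvd : ∀ t : ℤ, (t : ZMod n) * α = 0 → (t : ZMod n) * β = 0 → p₁ * q₂ - q₁ * p₂ ∣ t :=
    fun t h₁ h₂ => hdet ▸ (ZMod.intCast_zmod_eq_zero_iff_dvd t n).mp (hαβ _ h₁ h₂)
  refine Int.exists_eq_mul_add_mul_of_det_dvd (hdet ▸ Int.natCast_ne_zero.mpr hn)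
    (hdvd _ ?_ ?_) (hdvd _ ?_ ?_) <;> push_cast
  · linear_combination (q₂ : ZMod n) * huv - (v : ZMod n) * hQ
  · linear_combination (u : ZMod n) * hQ - (q₁ : ZMod n) * huv
  · linear_combination (v : ZMod n) * hP - (p₂ : ZMod n) * huv
  · linear_combination (p₁ : ZMod n) * huv - (u : ZMod n) * hP

def staircase (y₀ y₁ z₀ z₁ : ℕ) : Finset (ℕ × ℕ) :=
  range y₀ ×ˢ range z₀ ∪ range y₁ ×ˢ Ico z₀ z₁

section staircase

variable {y₀ y₁ z₀ z₁ : ℕ}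

theorem mem_staircase {p : ℕ × ℕ} : p ∈ staircase y₀ y₁ z₀ z₁ ↔
    (p.1 < y₀ ∧ p.2 < z₀) ∨ (p.1 < y₁ ∧ z₀ ≤ p.2 ∧ p.2 < z₁) := by
  simp [staircase]

theorem coe_staircase : (staircase y₀ y₁ z₀ z₁ : Set (ℕ × ℕ)) =
    {p | (p.1 < y₀ ∧ p.2 < z₀) ∨ (p.1 < y₁ ∧ z₀ ≤ p.2 ∧ p.2 < z₁)} :=
  Set.ext fun _ => mem_staircase

theorem card_staircase : #(staircase y₀ y₁ z₀ z₁) = y₀ * z₀ + y₁ * (z₁ - z₀) := by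
  have hdisj : Disjoint (range y₀ ×ˢ range z₀) (range y₁ ×ˢ Ico z₀ z₁) :=
    disjoint_product.mpr <| .inr <| by rw [range_eq_Ico]; exact Ico_disjoint_Ico_consecutive 0 z₀ z₁
  rw [staircase, card_union_of_disjoint hdisj]
  simp only [card_product, card_range, Nat.card_Ico]

theorem staircase_sub_not_lexPos (hy : y₁ ≤ y₀) (hz : z₀ ≤ z₁) {p p' : ℕ × ℕ}
    (hp : p ∈ staircase y₀ y₁ z₀ z₁) (hp' : p' ∈ staircase y₀ y₁ z₀ z₁) {m k : ℤ}
    (hu : (p.1 : ℤ) - p'.1 = m * y₀ + k * y₁) (hv : (p.2 : ℤ) - p'.2 = m * (z₀ - z₁) + k * z₀) :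
    ¬(0 < m ∨ m = 0 ∧ 0 < k) := by
  obtain ⟨y, z⟩ := p
  obtain ⟨y', z'⟩ := p'
  rw [mem_staircase] at hp hp'
  dsimp only at hp hp' hu hv
  have hu_lt : (y : ℤ) - y' < y₀ := by omega
  have hv_gt : -(z₁ : ℤ) < z - z' := by omega
  rintro (hm | ⟨rfl, hk⟩)
  · rcases le_or_gt 0 k with hk | hk
    · have : (y₀ : ℤ) ≤ m * y₀ + k * y₁ := by nlinarith
      linarith
    · have : m * (z₀ - z₁) + k * z₀ ≤ -(z₁ : ℤ) := by nlinarith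
      linarith
  · have hz : z₀ ≤ z := by nlinarith
    have hy : y < y₁ := by omega
    have : (y₁ : ℤ) ≤ k * y₁ := le_mul_of_one_le_left (by positivity) hk
    linarith

theorem eq_of_mem_staircase_of_sub_eq (hy : y₁ ≤ y₀) (hz : z₀ ≤ z₁) {p p' : ℕ × ℕ}
    (hp : p ∈ staircase y₀ y₁ z₀ z₁) (hp' : p' ∈ staircase y₀ y₁ z₀ z₁) {m k : ℤ}
    (hu : (p.1 : ℤ) - p'.1 = m * y₀ + k * y₁) (hv : (p.2 : ℤ) - p'.2 = m * (z₀ - z₁) + k * z₀) :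
    p = p' := by
  have hpos := staircase_sub_not_lexPos hy hz hp hp' hu hv
  have hneg := staircase_sub_not_lexPos hy hz hp' hp (m := -m) (k := -k)
    (by linear_combination -hu) (by linear_combination -hv)
  obtain ⟨rfl, rfl⟩ : m = 0 ∧ k = 0 := by omega
  ext <;> omega

end staircase

theorem injOn_staircase {n : ℕ} (hn : n ≠ 0) {α β : ZMod n}
    (hαβ : ∀ t : ZMod n, t * α = 0 → t * β = 0 → t = 0) {y₀ y₁ z₀ z₁ : ℕ}
    (hy : y₁ ≤ y₀) (hz : z₀ ≤ z₁) (hcard : y₀ * z₀ + y₁ * (z₁ - z₀) = n)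
    (hP : (y₀ : ZMod n) * α + ((z₀ : ZMod n) - z₁) * β = 0)
    (hQ : (y₁ : ZMod n) * α + z₀ * β = 0) :
    Set.InjOn (fun p : ℕ × ℕ => (p.1 : ZMod n) * α + p.2 * β) (staircase y₀ y₁ z₀ z₁) := by
  intro p hp p' hp' h
  have hdet : (y₀ : ℤ) * z₀ - y₁ * (z₀ - z₁) = n := by
    zify [hz] at hcard
    linear_combination hcard
  obtain ⟨m, k, hu, hv⟩ := exists_eq_mul_add_mul_of_det_eq hn hαβ hdet
    (u := p.1 - p'.1) (v := p.2 - p'.2) (by push_cast; exact hP) (by push_cast; exact hQ)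
    (by push_cast; linear_combination h)
  exact eq_of_mem_staircase_of_sub_eq hy hz hp hp' hu hv

theorem apery_staircase_bijOn_general (a₁ a₂ a₃ y₀ y₁ z₀ z₁ : ℕ)
    (ha₁ : 3 ≤ a₁)
    (hgcd : Nat.gcd a₁ (Nat.gcd a₂ a₃) = 1)
    (hy : y₁ ≤ y₀) (hz : z₀ ≤ z₁)
    (hii : a₁ = y₀ * z₀ + y₁ * (z₁ - z₀))
    (hiii₁ : (a₁ : ℤ) ∣ (y₀ : ℤ) * a₂ - ((z₁ : ℤ) - z₀) * a₃)
    (hiv : a₁ ∣ y₁ * a₂ + z₀ * a₃) :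
    Set.BijOn (fun p : ℕ × ℕ => ((p.1 * a₂ + p.2 * a₃ : ℕ) : ZMod a₁))
      {p : ℕ × ℕ | (p.1 < y₀ ∧ p.2 < z₀) ∨ (p.1 < y₁ ∧ z₀ ≤ p.2 ∧ p.2 < z₁)}
      Set.univ := by
  have : NeZero a₁ := ⟨by omega⟩
  have hP : (y₀ : ZMod a₁) * a₂ + ((z₀ : ZMod a₁) - z₁) * a₃ = 0 := by
    have h := (ZMod.intCast_zmod_eq_zero_iff_dvd _ _).mpr hiii₁
    push_cast at h
    linear_combination h
  have hQ : (y₁ : ZMod a₁) * a₂ + z₀ * a₃ = 0 := by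
    exact_mod_cast (ZMod.natCast_eq_zero_iff _ _).mpr hiv
  have hinj := injOn_staircase (NeZero.ne a₁)
    (fun _ => ZMod.eq_zero_of_mul_natCast_eq_zero hgcd) hy hz hii.symm hP hQ
  have hf : (fun p : ℕ × ℕ => ((p.1 * a₂ + p.2 * a₃ : ℕ) : ZMod a₁)) =
      fun p => (p.1 : ZMod a₁) * a₂ + p.2 * a₃ := by
    funext p
    push_cast
    rfl
  rw [hf, ← coe_staircase, ← coe_univ]
  refine ⟨fun _ _ => mem_coe.mpr (mem_univ _), hinj,
    surjOn_of_injOn_of_card_le _ (fun _ _ => mem_coe.mpr (mem_univ _)) hinj ?_⟩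
  rw [card_univ, ZMod.card, card_staircase, hii]

/-- Staircase structure of the 0-Apéry set: given `3 ≤ a₁ < a₂ < a₃` with
`gcd(a₁, a₂, a₃) = 1` and nonnegative integers `y₀, y₁, z₀, z₁` satisfying
(i) `y₁ ≤ y₀`, `z₀ ≤ z₁`;
(ii) `a₁ = y₀·z₀ + y₁·(z₁ − z₀)`;
(iii) `a₁ ∣ y₀·a₂ − (z₁ − z₀)·a₃` and `y₀·a₂ > (z₁ − z₀)·a₃`;
(iv) `a₁ ∣ y₁·a₂ + z₀·a₃`;
the map `(y, z) ↦ (y·a₂ + z·a₃) mod a₁` is a bijection from the staircase region `R` onto the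
residue classes modulo `a₁`. -/
theorem apery_staircase_bijOn (a₁ a₂ a₃ y₀ y₁ z₀ z₁ : ℕ)
    (ha₁ : 3 ≤ a₁) (h₁₂ : a₁ < a₂) (h₂₃ : a₂ < a₃)
    (hgcd : Nat.gcd a₁ (Nat.gcd a₂ a₃) = 1)
    (hy : y₁ ≤ y₀) (hz : z₀ ≤ z₁)
    (hii : a₁ = y₀ * z₀ + y₁ * (z₁ - z₀))
    (hiii₁ : (a₁ : ℤ) ∣ (y₀ : ℤ) * a₂ - ((z₁ : ℤ) - z₀) * a₃)
    (hiii₂ : ((z₁ : ℤ) - z₀) * a₃ < (y₀ : ℤ) * a₂)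
    (hiv : a₁ ∣ y₁ * a₂ + z₀ * a₃) :
    Set.BijOn (fun p : ℕ × ℕ => ((p.1 * a₂ + p.2 * a₃ : ℕ) : ZMod a₁))
      {p : ℕ × ℕ | (p.1 < y₀ ∧ p.2 < z₀) ∨ (p.1 < y₁ ∧ z₀ ≤ p.2 ∧ p.2 < z₁)}
      Set.univ :=
  apery_staircase_bijOn_general a₁ a₂ a₃ y₀ y₁ z₀ z₁ ha₁ hgcd hy hz hii hiii₁ hiv
end
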